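/- On an almost paracontact metric manifold whose characteristic form τ is a contact form, the following conditions are equivalent: (a) the Reeb vector field R of τ (defined by τ(R) = 1 and ι_R dτ = 0) coincides with the characteristic vector field ζ; (b) L_ζτ = 0; (c) ζ is autoparallel with respect to the Levi-Civita connection, ∇_ζζ = 0; (d) hψ + ψh = 0, where h = (1/2)·L_ζψ; and also (e) τ∘h = 0. -/
import Mathlib


noncomputable section

/-!
An abstract model of smooth geometry: `F` plays the role of the algebra of
smooth real-valued functions on a manifold `M`, `V` plays the role of the
`C^∞(M)`-module of smooth vector fields on `M` (with its Lie bracket), and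
`D X f` represents the directional derivative of the function `f` along the
vector field `X`.
-/
structure SmoothSetting (F V : Type*) [CommRing F] [Algebra ℝ F]
    [LieRing V] [Module F V] [Module ℝ V] [IsScalarTower ℝ F V] where
  D : V → F → F
  D_add : ∀ (X : V) (f g : F), D X (f + g) = D X f + D X g
  D_mul : ∀ (X : V) (f g : F), D X (f * g) = f * D X g + g * D X f
  D_addX : ∀ (X Y : V) (f : F), D (X + Y) f = D X f + D Y f
  D_smulX : ∀ (f : F) (X : V) (k : F), D (f • X) k = f * D X k
  D_bracket : ∀ (X Y : V) (f : F), D ⁅X, Y⁆ f = D X (D Y f) - D Y (D X f)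
  bracket_smul : ∀ (f : F) (X Y : V), ⁅X, f • Y⁆ = f • ⁅X, Y⁆ + D X f • Y

/-- An almost paracontact metric manifold, modelled abstractly: a quadruple
`(ψ, ζ, τ, g)` where `ψ` is a `(1,1)`-tensor field, `ζ` a vector field, `τ` a
one-form and `g` a pseudo-Riemannian metric, satisfying `ψ² = Id - τ ⊗ ζ`,
`τ(ζ) = 1` and `g(ψX, ψY) = -g(X,Y) + τ(X)τ(Y)` (together with the standard
consequent identities `ψζ = 0`, `τ ∘ ψ = 0`), and the Levi-Civita connection
`nabla` of `g` (characterised by metricity and torsion-freeness). -/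
structure APCMS (F V : Type*) [CommRing F] [Algebra ℝ F]
    [LieRing V] [Module F V] [Module ℝ V] [IsScalarTower ℝ F V]
    extends SmoothSetting F V where
  psi : V → V
  zeta : V
  tau : V → F
  g : V → V → F
  psi_add : ∀ X Y : V, psi (X + Y) = psi X + psi Y
  psi_smul : ∀ (f : F) (X : V), psi (f • X) = f • psi X
  tau_add : ∀ X Y : V, tau (X + Y) = tau X + tau Y
  tau_smul : ∀ (f : F) (X : V), tau (f • X) = f * tau X
  g_addX : ∀ X Y Z : V, g (X + Y) Z = g X Z + g Y Z
  g_smulX : ∀ (f : F) (X Y : V), g (f • X) Y = f * g X Y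
  g_symm : ∀ X Y : V, g X Y = g Y X
  g_nondeg : ∀ X : V, (∀ Y : V, g X Y = 0) → X = 0
  psi_psi : ∀ X : V, psi (psi X) = X - tau X • zeta
  tau_zeta : tau zeta = 1
  psi_zeta : psi zeta = 0
  tau_psi : ∀ X : V, tau (psi X) = 0
  g_psi_psi : ∀ X Y : V, g (psi X) (psi Y) = - g X Y + tau X * tau Y
  nabla : V → V → V
  nabla_addX : ∀ X Y Z : V, nabla (X + Y) Z = nabla X Z + nabla Y Z
  nabla_smulX : ∀ (f : F) (X Y : V), nabla (f • X) Y = f • nabla X Y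
  nabla_addY : ∀ X Y Z : V, nabla X (Y + Z) = nabla X Y + nabla X Z
  nabla_leibniz : ∀ (X : V) (f : F) (Y : V),
    nabla X (f • Y) = D X f • Y + f • nabla X Y
  nabla_torsion_free : ∀ X Y : V, nabla X Y - nabla Y X = ⁅X, Y⁆
  nabla_metric : ∀ X Y Z : V,
    D X (g Y Z) = g (nabla X Y) Z + g Y (nabla X Z)

namespace APCMS

variable {F V : Type*} [CommRing F] [Algebra ℝ F]
  [LieRing V] [Module F V] [Module ℝ V] [IsScalarTower ℝ F V]
variable (A : APCMS F V)

/-- The fundamental form `Ψ(X,Y) = g(X, ψY)`. -/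
def Psi2 (X Y : V) : F := A.g X (A.psi Y)

/-- The exterior derivative `dτ`, via the coboundary formula
`2 dτ(X,Y) = X τ(Y) - Y τ(X) - τ([X,Y])`. -/
def dTau (X Y : V) : F :=
  ((1:ℝ)/2) • (A.D X (A.tau Y) - A.D Y (A.tau X) - A.tau ⁅X, Y⁆)

/-- The exterior derivative `dΨ`, via the coboundary formula. -/
def dPsi (X Y Z : V) : F :=
  ((1:ℝ)/3) • (A.D X (A.Psi2 Y Z) + A.D Y (A.Psi2 Z X) + A.D Z (A.Psi2 X Y)
    - A.Psi2 ⁅X, Y⁆ Z - A.Psi2 ⁅Y, Z⁆ X - A.Psi2 ⁅Z, X⁆ Y)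

/-- The Lie derivative `(L_ζ τ)(X)`. -/
def lieTau (X : V) : F := A.D A.zeta (A.tau X) - A.tau ⁅A.zeta, X⁆

/-- The Lie derivative `(L_ζ ψ)(X)`. -/
def liePsi (X : V) : V := ⁅A.zeta, A.psi X⁆ - A.psi ⁅A.zeta, X⁆

/-- The tensor field `h = (1/2) L_ζ ψ`. -/
def h (X : V) : V := ((1:ℝ)/2) • A.liePsi X

/-- The Nijenhuis torsion `[ψ,ψ](X,Y)`. -/
def nijPsi (X Y : V) : V :=
  A.psi (A.psi ⁅X, Y⁆) + ⁅A.psi X, A.psi Y⁆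
    - A.psi ⁅A.psi X, Y⁆ - A.psi ⁅X, A.psi Y⁆

/-- The tensor `K⁽¹⁾(X,Y) = [ψ,ψ](X,Y) - 2 dτ(X,Y) ζ`. -/
def K1 (X Y : V) : V := A.nijPsi X Y - (2 * A.dTau X Y) • A.zeta

/-- The tensor `K⁽²⁾(X,Y) = (L_{ψX} τ)(Y) - (L_{ψY} τ)(X)`. -/
def K2 (X Y : V) : F :=
  (A.D (A.psi X) (A.tau Y) - A.tau ⁅A.psi X, Y⁆)
    - (A.D (A.psi Y) (A.tau X) - A.tau ⁅A.psi Y, X⁆)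

/-- The covariant derivative `(∇_X ψ)(Y)`. -/
def covPsi (X Y : V) : V := A.nabla X (A.psi Y) - A.psi (A.nabla X Y)

/-- `M` is `τ`-normal: `K⁽¹⁾(X,Y) = 0` whenever `τ(X) = τ(Y) = 0`. -/
def TauNormal : Prop := ∀ X Y : V, A.tau X = 0 → A.tau Y = 0 → A.K1 X Y = 0

/-- `M` is normal: `K⁽¹⁾ = 0` identically. -/
def Normal : Prop := ∀ X Y : V, A.K1 X Y = 0

/-- `X` is a section of the `+1`-eigendistribution `V⁺` of `ψ`. -/
def Vp (X : V) : Prop := A.psi X = X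

/-- `X` is a section of the `-1`-eigendistribution `V⁻` of `ψ`. -/
def Vm (X : V) : Prop := A.psi X = -X

/-- `M` is a para-CR manifold: both eigendistributions `V⁺`, `V⁻` of `ψ` are
involutive. -/
def ParaCR : Prop :=
  (∀ X Y : V, A.Vp X → A.Vp Y → A.Vp ⁅X, Y⁆) ∧
  (∀ X Y : V, A.Vm X → A.Vm Y → A.Vm ⁅X, Y⁆)

/-- The characteristic form `τ` is a contact form: `dτ` is nondegenerate on
the kernel distribution of `τ`. -/
def IsContact : Prop :=
  ∀ X : V, A.tau X = 0 → (∀ Y : V, A.dTau X Y = 0) → X = 0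

/-- The Reeb vector field of the contact form `τ` equals the characteristic
vector field `ζ` (i.e. `τ(ζ) = 1`, which holds by definition, and
`ι_ζ dτ = 0`). -/
def ReebEqZeta : Prop := ∀ X : V, A.dTau A.zeta X = 0

/-- The Pang invariant `Π(X,Y) = (L_X L_Y τ)(ζ) = -τ([[ζ,X],Y])`; restricted
to sections of `V⁺` (resp. `V⁻`) it is the Pang invariant `Π₊` (resp. `Π₋`)
of the Legendrian foliation determined by `V⁺` (resp. `V⁻`). -/
def Pang (X Y : V) : F := - A.tau ⁅⁅A.zeta, X⁆, Y⁆

/-- The tensor field `χ(X,Y) = dτ(hX, ψY)`. -/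
def chi (X Y : V) : F := A.dTau (A.h X) (A.psi Y)

/-- `Dc` is a linear connection on `M`. -/
def IsConnection (Dc : V → V → V) : Prop :=
  (∀ X Y Z : V, Dc (X + Y) Z = Dc X Z + Dc Y Z) ∧
  (∀ (f : F) (X Y : V), Dc (f • X) Y = f • Dc X Y) ∧
  (∀ X Y Z : V, Dc X (Y + Z) = Dc X Y + Dc X Z) ∧
  (∀ (X : V) (f : F) (Y : V), Dc X (f • Y) = A.D X f • Y + f • Dc X Y)

/-- `Dc` is a parallelization: a linear connection making the whole almost
paracontact metric structure parallel: `∇̃ψ = 0`, `∇̃ζ = 0`, `∇̃τ = 0`,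
`∇̃g = 0`. -/
def IsParallelization (Dc : V → V → V) : Prop :=
  A.IsConnection Dc ∧
  (∀ X Y : V, Dc X (A.psi Y) = A.psi (Dc X Y)) ∧
  (∀ X : V, Dc X A.zeta = 0) ∧
  (∀ X Y : V, A.D X (A.tau Y) = A.tau (Dc X Y)) ∧
  (∀ X Y Z : V, A.D X (A.g Y Z) = A.g (Dc X Y) Z + A.g Y (Dc X Z))

end APCMS

/- Auxiliary lemmas -/

private lemma aux_addself {M : Type*} [AddCommGroup M] [Module ℝ M] {x : M}
    (h : x + x = 0) : x = 0 := by
  have h2 : (2:ℝ) • x = 0 := by rw [two_smul]; exact h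
  calc x = ((1:ℝ)/2) • ((2:ℝ) • x) := by
        rw [smul_smul]; norm_num
    _ = 0 := by rw [h2, smul_zero]

private lemma aux_halfz {M : Type*} [AddCommGroup M] [Module ℝ M] {x : M}
    (h : ((1:ℝ)/2) • x = 0) : x = 0 := by
  calc x = (2:ℝ) • (((1:ℝ)/2) • x) := by
        rw [smul_smul]; norm_num
    _ = 0 := by rw [h, smul_zero]

namespace APCMS

variable {F V : Type*} [CommRing F] [Algebra ℝ F]
  [LieRing V] [Module F V] [Module ℝ V] [IsScalarTower ℝ F V]
  (A : APCMS F V)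

lemma D_zero' (X : V) : A.D X 0 = 0 := by
  have h := A.D_add X 0 0
  rw [add_zero] at h
  exact left_eq_add.mp h

lemma D_one' (X : V) : A.D X 1 = 0 := by
  have h := A.D_mul X 1 1
  rw [mul_one, one_mul] at h
  exact left_eq_add.mp h

lemma tau_zero' : A.tau 0 = 0 := by
  simpa using A.tau_smul 0 (0:V)

lemma tau_neg' (X : V) : A.tau (-X) = - A.tau X := by
  have h := A.tau_smul (-1) X
  rw [neg_one_smul] at h
  rw [h]; ring

lemma tau_sub' (X Y : V) : A.tau (X - Y) = A.tau X - A.tau Y := by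
  rw [sub_eq_add_neg, A.tau_add, A.tau_neg', ← sub_eq_add_neg]

lemma tau_rsmul (r : ℝ) (X : V) : A.tau (r • X) = r • A.tau X := by
  rw [← algebraMap_smul F r X, A.tau_smul, Algebra.smul_def]

lemma g_zero_left (X : V) : A.g 0 X = 0 := by
  simpa using A.g_smulX 0 (0:V) X

lemma psi_neg' (X : V) : A.psi (-X) = - A.psi X := by
  have h := A.psi_smul (-1) X
  rwa [neg_one_smul, neg_one_smul] at h

lemma psi_sub' (X Y : V) : A.psi (X - Y) = A.psi X - A.psi Y := by
  rw [sub_eq_add_neg, A.psi_add, A.psi_neg', sub_eq_add_neg]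

lemma psi_rsmul (r : ℝ) (X : V) : A.psi (r • X) = r • A.psi X := by
  rw [← algebraMap_smul F r X, A.psi_smul, algebraMap_smul]

lemma g_zeta (Y : V) : A.g A.zeta Y = A.tau Y := by
  have h := A.g_psi_psi A.zeta Y
  rw [A.psi_zeta, A.g_zero_left, A.tau_zeta, one_mul] at h
  linear_combination h

lemma tau_nabla_zeta (X : V) : A.tau (A.nabla X A.zeta) = 0 := by
  have hm := A.nabla_metric X A.zeta A.zeta
  rw [A.g_symm (A.nabla X A.zeta) A.zeta] at hm
  simp only [A.g_zeta, A.tau_zeta, A.D_one'] at hm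
  exact aux_addself hm.symm

lemma lieTau_eq_g (X : V) : A.lieTau X = A.g (A.nabla A.zeta A.zeta) X := by
  have hm := A.nabla_metric A.zeta A.zeta X
  have ht : A.nabla A.zeta X = A.nabla X A.zeta + ⁅A.zeta, X⁆ := by
    rw [← A.nabla_torsion_free]; abel
  rw [ht] at hm
  have gadd : A.g A.zeta (A.nabla X A.zeta + ⁅A.zeta, X⁆)
      = A.tau (A.nabla X A.zeta) + A.tau ⁅A.zeta, X⁆ := by
    rw [A.g_zeta, A.tau_add]
  rw [gadd, A.tau_nabla_zeta, zero_add, A.g_zeta] at hm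
  unfold lieTau
  linear_combination hm

lemma dTau_zeta' (X : V) : A.dTau A.zeta X = ((1:ℝ)/2) • A.lieTau X := by
  unfold dTau lieTau
  rw [A.tau_zeta, A.D_one', sub_zero]

lemma lieTau_add' (X Y : V) :
    A.lieTau (X + Y) = A.lieTau X + A.lieTau Y := by
  unfold lieTau
  rw [A.tau_add, A.D_add, lie_add, A.tau_add]; ring

lemma lieTau_smul' (f : F) (X : V) :
    A.lieTau (f • X) = f * A.lieTau X := by
  unfold lieTau
  rw [A.tau_smul, A.D_mul, A.bracket_smul, A.tau_add, A.tau_smul, A.tau_smul]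
  ring

lemma lieTau_zeta' : A.lieTau A.zeta = 0 := by
  unfold lieTau
  rw [A.tau_zeta, A.D_one', lie_self, A.tau_zero', sub_zero]

lemma key_hpsi (X : V) :
    A.h (A.psi X) + A.psi (A.h X)
      = ((1:ℝ)/2) • ((- A.lieTau X) • A.zeta) := by
  have e1 : A.psi (A.psi ⁅A.zeta, X⁆)
      = ⁅A.zeta, X⁆ - A.tau ⁅A.zeta, X⁆ • A.zeta := A.psi_psi _
  have e2 : ⁅A.zeta, A.psi (A.psi X)⁆
      = ⁅A.zeta, X⁆ - A.D A.zeta (A.tau X) • A.zeta := by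
    rw [A.psi_psi, lie_sub, A.bracket_smul, lie_self, smul_zero, zero_add]
  unfold h liePsi
  rw [A.psi_rsmul, ← smul_add, A.psi_sub', e1, e2]
  unfold lieTau
  rw [neg_sub, sub_smul]
  congr 1
  abel

lemma tau_h' (X : V) :
    A.tau (A.h X) = ((1:ℝ)/2) • (- A.lieTau (A.psi X)) := by
  have h1 : A.lieTau (A.psi X) = - A.tau ⁅A.zeta, A.psi X⁆ := by
    unfold lieTau
    rw [A.tau_psi, A.D_zero', zero_sub]
  unfold h liePsi
  rw [A.tau_rsmul, A.tau_sub', A.tau_psi, sub_zero, h1, neg_neg]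

lemma lieTau_all_iff_reeb : A.ReebEqZeta ↔ (∀ X : V, A.lieTau X = 0) := by
  constructor
  · intro hr X
    have := hr X
    rw [A.dTau_zeta'] at this
    exact aux_halfz this
  · intro hp X
    rw [A.dTau_zeta', hp X, smul_zero]

lemma lieTau_all_iff_nabla :
    (∀ X : V, A.lieTau X = 0) ↔ A.nabla A.zeta A.zeta = 0 := by
  constructor
  · intro hp
    apply A.g_nondeg
    intro Y
    rw [← A.lieTau_eq_g]; exact hp Y
  · intro hn X
    rw [A.lieTau_eq_g, hn, A.g_zero_left]

lemma lieTau_all_iff_hpsi :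
    (∀ X : V, A.lieTau X = 0) ↔
      (∀ X : V, A.h (A.psi X) + A.psi (A.h X) = 0) := by
  constructor
  · intro hp X
    rw [A.key_hpsi, hp X, neg_zero, zero_smul, smul_zero]
  · intro hd X
    have h0 := hd X
    rw [A.key_hpsi] at h0
    have h1 : (- A.lieTau X) • A.zeta = 0 := aux_halfz h0
    have h2 := congrArg A.tau h1
    rw [A.tau_smul, A.tau_zeta, mul_one, A.tau_zero'] at h2
    exact neg_eq_zero.mp h2

lemma lieTau_all_iff_tauh :
    (∀ X : V, A.lieTau X = 0) ↔ (∀ X : V, A.tau (A.h X) = 0) := by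
  constructor
  · intro hp X
    rw [A.tau_h', hp, neg_zero, smul_zero]
  · intro he X
    have hq : ∀ Y : V, A.lieTau (A.psi Y) = 0 := by
      intro Y
      have := he Y
      rw [A.tau_h'] at this
      have := aux_halfz this
      exact neg_eq_zero.mp this
    have h0 := hq (A.psi X)
    rw [A.psi_psi, sub_eq_add_neg, ← neg_smul, A.lieTau_add', A.lieTau_smul',
      A.lieTau_zeta', mul_zero, add_zero] at h0
    exact h0

end APCMS

/-- On an almost paracontact metric manifold whose
characteristic form `τ` is a contact form, the following are equivalent:
(a) the Reeb vector field `R` of `τ` (with `τ(R) = 1`, `ι_R dτ = 0`) equals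
the characteristic vector field `ζ`; (b) `L_ζτ = 0`; (c) `ζ` is autoparallel
for the Levi-Civita connection, `∇_ζζ = 0`; (d) `hψ + ψh = 0`; and also
(e) `τ ∘ h = 0`. -/
theorem reeb_eq_zeta_equivalences
    {F V : Type*} [CommRing F] [Algebra ℝ F]
    [LieRing V] [Module F V] [Module ℝ V] [IsScalarTower ℝ F V]
    (A : APCMS F V) (hc : A.IsContact) :
    (A.ReebEqZeta ↔ (∀ X : V, A.lieTau X = 0)) ∧
    ((∀ X : V, A.lieTau X = 0) ↔ A.nabla A.zeta A.zeta = 0) ∧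
    (A.nabla A.zeta A.zeta = 0 ↔
      (∀ X : V, A.h (A.psi X) + A.psi (A.h X) = 0)) ∧
    ((∀ X : V, A.h (A.psi X) + A.psi (A.h X) = 0) ↔
      (∀ X : V, A.tau (A.h X) = 0)) := by
  refine ⟨A.lieTau_all_iff_reeb, A.lieTau_all_iff_nabla, ?_, ?_⟩
  · exact A.lieTau_all_iff_nabla.symm.trans A.lieTau_all_iff_hpsi
  · exact A.lieTau_all_iff_hpsi.symm.trans A.lieTau_all_iff_tauh
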